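/- arXiv:2110.01764 — 3 statements merged into one kernel-verified Lean document; each statement's English description precedes it below -/
import Mathlib

section
/- Let T > 0, β ≥ 0, and let α be a probability measure on [−T, 0]. Let Y : ℝ → ℝ be measurable with Y(t) = Y(0) for all t < 0, and let Z : ℝ × ℝ → ℝ be measurable with Z(t,s) = 0 whenever t < 0 or s < 0. Then ∫_{[0,T]×[0,T]} e^{βs} (∫_{[−T,0]} (|Y(s+u)|² + |Z(t+u, s+u)|²) dα(u)) ds dt ≤ (∫_{[−T,0]} e^{−βu} dα(u)) · ( T ∫_{−T}^{T} e^{βs} |Y(s)|² ds + ∫_{[0,T]×[0,T]} e^{βs} |Z(t,s)|² ds dt ) ≤ e^{βT} ( T ∫_{−T}^{T} e^{βs} |Y(s)|² ds + ∫_{[0,T]×[0,T]} e^{βs} |Z(t,s)|² ds dt ), where both sides are allowed to equal +∞. -/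
/-!
For a fixed delay `u ∈ [-T, 0]` substitute `v = s + u` (and `t + u` for the first variable of
`Z`). The weight factors as `e^{βs} = e^{-βu} e^{βv}`; for the `Y`-term the shifted window
`[u, T + u]` lies in `[-T, T]`, and for the `Z`-term the part of `[u, T + u]` below `0`
contributes nothing because `Z` vanishes there. Integrating this bound in `u` against `α`
(Tonelli) gives the first inequality, and `e^{-βu} ≤ e^{βT}` on the support of `α` the second.
-/

open MeasureTheory Set

open scoped ENNReal

theorem setLIntegral_Icc_comp_add_right (f : ℝ → ℝ≥0∞) (a b u : ℝ) :
    ∫⁻ s in Icc a b, f (s + u) = ∫⁻ s in Icc (a + u) (b + u), f s := by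
  simpa [preimage_add_const_Icc] using
    (measurePreserving_add_right volume u).setLIntegral_comp_preimage_emb
      (measurableEmbedding_addRight u) f (Icc (a + u) (b + u))

theorem setLIntegral_Icc_zero_comp_add_le {f : ℝ → ℝ≥0∞} (hf : ∀ v < 0, f v = 0) {u : ℝ}
    (hu : u ≤ 0) (T : ℝ) :
    ∫⁻ s in Icc 0 T, f (s + u) ≤ ∫⁻ s in Icc 0 T, f s := by
  have hneg : ∫⁻ s in Iio 0, f s = 0 := by
    rw [setLIntegral_congr_fun measurableSet_Iio hf, lintegral_zero]
  calc ∫⁻ s in Icc 0 T, f (s + u) = ∫⁻ s in Icc u (T + u), f s := by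
        rw [setLIntegral_Icc_comp_add_right, zero_add]
    _ ≤ ∫⁻ s in Iio 0 ∪ Icc 0 T, f s := lintegral_mono_set fun v hv => by
        rcases lt_or_ge v 0 with h | h
        · exact Or.inl h
        · exact Or.inr ⟨h, by linarith [hv.2]⟩
    _ ≤ ∫⁻ s in Icc 0 T, f s :=
        (lintegral_union_le f (Iio 0) (Icc 0 T)).trans_eq (by rw [hneg, zero_add])

theorem lintegral_lintegral_lintegral_swap {X Y W : Type*} [MeasurableSpace X]
    [MeasurableSpace Y] [MeasurableSpace W] {μ : Measure X} {ν : Measure Y} {ρ : Measure W}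
    [SFinite μ] [SFinite ν] [SFinite ρ] {f : X → Y → W → ℝ≥0∞}
    (hf : Measurable fun p : X × Y × W => f p.1 p.2.1 p.2.2) :
    ∫⁻ x, ∫⁻ y, ∫⁻ w, f x y w ∂ρ ∂ν ∂μ = ∫⁻ w, ∫⁻ x, ∫⁻ y, f x y w ∂ν ∂μ ∂ρ := by
  have hinner : ∀ x, ∫⁻ y, ∫⁻ w, f x y w ∂ρ ∂ν = ∫⁻ w, ∫⁻ y, f x y w ∂ν ∂ρ := fun x =>
    lintegral_lintegral_swap (hf.comp (measurable_const.prodMk measurable_id)).aemeasurable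
  simp_rw [hinner]
  refine lintegral_lintegral_swap (Measurable.aemeasurable ?_)
  exact (hf.comp (by fun_prop : Measurable fun q : (X × W) × Y => (q.1.1, q.2, q.1.2)))
    |>.lintegral_prod_right'

theorem ofReal_exp_mul_eq_mul_ofReal_exp_mul_add (β s u : ℝ) :
    ENNReal.ofReal (Real.exp (β * s))
      = ENNReal.ofReal (Real.exp (-(β * u))) * ENNReal.ofReal (Real.exp (β * (s + u))) := by
  rw [← ENNReal.ofReal_mul (Real.exp_nonneg _), ← Real.exp_add]
  ring_nf

theorem setLIntegral_exp_mul_comp_add_eq (β : ℝ) (g : ℝ → ℝ≥0∞) (S : Set ℝ) (u : ℝ) :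
    ∫⁻ s in S, ENNReal.ofReal (Real.exp (β * s)) * g (s + u)
      = ENNReal.ofReal (Real.exp (-(β * u))) *
          ∫⁻ s in S, ENNReal.ofReal (Real.exp (β * (s + u))) * g (s + u) := by
  rw [← lintegral_const_mul' _ _ ENNReal.ofReal_ne_top]
  refine lintegral_congr fun s => ?_
  rw [ofReal_exp_mul_eq_mul_ofReal_exp_mul_add β s u, mul_assoc]

theorem setLIntegral_exp_mul_comp_add_le (β : ℝ) (f : ℝ → ℝ≥0∞) {T u : ℝ}
    (hu : u ∈ Icc (-T) 0) :
    ∫⁻ s in Icc 0 T, ENNReal.ofReal (Real.exp (β * s)) * f (s + u)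
      ≤ ENNReal.ofReal (Real.exp (-(β * u))) *
          ∫⁻ s in Icc (-T) T, ENNReal.ofReal (Real.exp (β * s)) * f s := by
  rw [setLIntegral_exp_mul_comp_add_eq,
    setLIntegral_Icc_comp_add_right (fun s => ENNReal.ofReal (Real.exp (β * s)) * f s), zero_add]
  exact mul_le_mul_right (lintegral_mono_set (Icc_subset_Icc hu.1 (by linarith [hu.2]))) _

theorem setLIntegral_setLIntegral_exp_mul_comp_add_le (β : ℝ) {F : ℝ → ℝ → ℝ≥0∞}
    (hF : ∀ t s, t < 0 ∨ s < 0 → F t s = 0) {u : ℝ} (hu : u ≤ 0) (T : ℝ) :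
    ∫⁻ t in Icc 0 T, ∫⁻ s in Icc 0 T, ENNReal.ofReal (Real.exp (β * s)) * F (t + u) (s + u)
      ≤ ENNReal.ofReal (Real.exp (-(β * u))) *
          ∫⁻ t in Icc 0 T, ∫⁻ s in Icc 0 T, ENNReal.ofReal (Real.exp (β * s)) * F t s := by
  have hinner : ∀ t, ∫⁻ s in Icc 0 T, ENNReal.ofReal (Real.exp (β * s)) * F t (s + u)
      ≤ ENNReal.ofReal (Real.exp (-(β * u))) *
          ∫⁻ s in Icc 0 T, ENNReal.ofReal (Real.exp (β * s)) * F t s := fun t => by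
    rw [setLIntegral_exp_mul_comp_add_eq β (F t)]
    refine mul_le_mul_right (setLIntegral_Icc_zero_comp_add_le (fun v hv => ?_) hu T) _
    simp [hF t v (Or.inr hv)]
  calc _ ≤ ∫⁻ t in Icc 0 T, ENNReal.ofReal (Real.exp (-(β * u))) *
          ∫⁻ s in Icc 0 T, ENNReal.ofReal (Real.exp (β * s)) * F (t + u) s :=
        lintegral_mono fun t => hinner (t + u)
    _ ≤ _ := by
        rw [lintegral_const_mul' _ _ ENNReal.ofReal_ne_top]
        refine mul_le_mul_right (setLIntegral_Icc_zero_comp_add_le (fun v hv => ?_) hu T) _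
        simp [hF v _ (Or.inl hv)]

theorem setLIntegral_setLIntegral_exp_mul_delay_le (β T : ℝ) {f : ℝ → ℝ≥0∞} (hf : Measurable f)
    {F : ℝ → ℝ → ℝ≥0∞} (hF : ∀ t s, t < 0 ∨ s < 0 → F t s = 0) {u : ℝ}
    (hu : u ∈ Icc (-T) 0) :
    ∫⁻ t in Icc 0 T, ∫⁻ s in Icc 0 T,
        ENNReal.ofReal (Real.exp (β * s)) * (f (s + u) + F (t + u) (s + u))
      ≤ ENNReal.ofReal (Real.exp (-(β * u))) *
          (ENNReal.ofReal T * (∫⁻ s in Icc (-T) T, ENNReal.ofReal (Real.exp (β * s)) * f s)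
            + ∫⁻ t in Icc 0 T, ∫⁻ s in Icc 0 T, ENNReal.ofReal (Real.exp (β * s)) * F t s) := by
  have hfu : Measurable fun s => ENNReal.ofReal (Real.exp (β * s)) * f (s + u) := by fun_prop
  simp_rw [mul_add]
  rw [lintegral_congr fun t => lintegral_add_left hfu _, lintegral_add_left measurable_const,
    setLIntegral_const, Real.volume_Icc, sub_zero]
  calc _ ≤ (ENNReal.ofReal (Real.exp (-(β * u))) *
          ∫⁻ s in Icc (-T) T, ENNReal.ofReal (Real.exp (β * s)) * f s) * ENNReal.ofReal T
        + ENNReal.ofReal (Real.exp (-(β * u))) *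
          ∫⁻ t in Icc 0 T, ∫⁻ s in Icc 0 T, ENNReal.ofReal (Real.exp (β * s)) * F t s :=
        add_le_add (mul_le_mul_left (setLIntegral_exp_mul_comp_add_le β f hu) _)
          (setLIntegral_setLIntegral_exp_mul_comp_add_le β hF hu.2 T)
    _ = _ := by ring

theorem setLIntegral_setLIntegral_exp_mul_lintegral_delay_le (β T : ℝ) (α : Measure ℝ)
    [SFinite α] (hα : α (Icc (-T) 0)ᶜ = 0) {f : ℝ → ℝ≥0∞} (hf : Measurable f)
    {F : ℝ → ℝ → ℝ≥0∞} (hFm : Measurable (Function.uncurry F))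
    (hF : ∀ t s, t < 0 ∨ s < 0 → F t s = 0) :
    ∫⁻ t in Icc 0 T, ∫⁻ s in Icc 0 T,
        ENNReal.ofReal (Real.exp (β * s)) * ∫⁻ u, (f (s + u) + F (t + u) (s + u)) ∂α
      ≤ (∫⁻ u, ENNReal.ofReal (Real.exp (-(β * u))) ∂α) *
          (ENNReal.ofReal T * (∫⁻ s in Icc (-T) T, ENNReal.ofReal (Real.exp (β * s)) * f s)
            + ∫⁻ t in Icc 0 T, ∫⁻ s in Icc 0 T, ENNReal.ofReal (Real.exp (β * s)) * F t s) := by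
  have hsupp : ∀ᵐ u ∂α, u ∈ Icc (-T) 0 := mem_ae_iff.mpr hα
  have hm : Measurable fun p : ℝ × ℝ × ℝ => ENNReal.ofReal (Real.exp (β * p.2.1)) *
      (f (p.2.1 + p.2.2) + F (p.1 + p.2.2) (p.2.1 + p.2.2)) := by
    have hFshift : Measurable fun p : ℝ × ℝ × ℝ => F (p.1 + p.2.2) (p.2.1 + p.2.2) :=
      hFm.comp (by fun_prop : Measurable fun p : ℝ × ℝ × ℝ => (p.1 + p.2.2, p.2.1 + p.2.2))
    fun_prop
  calc _ = ∫⁻ t in Icc 0 T, ∫⁻ s in Icc 0 T, ∫⁻ u,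
        ENNReal.ofReal (Real.exp (β * s)) * (f (s + u) + F (t + u) (s + u)) ∂α := by
        refine lintegral_congr fun t => lintegral_congr fun s => ?_
        exact (lintegral_const_mul' _ _ ENNReal.ofReal_ne_top).symm
    _ = ∫⁻ u, (∫⁻ t in Icc 0 T, ∫⁻ s in Icc 0 T,
        ENNReal.ofReal (Real.exp (β * s)) * (f (s + u) + F (t + u) (s + u))) ∂α :=
        lintegral_lintegral_lintegral_swap hm
    _ ≤ _ := by
        rw [← lintegral_mul_const _ (by fun_prop)]
        exact lintegral_mono_ae (hsupp.mono fun u hu =>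
          setLIntegral_setLIntegral_exp_mul_delay_le β T hf hF hu)

theorem lintegral_ofReal_exp_neg_mul_le {β T : ℝ} (hβ : 0 ≤ β) (α : Measure ℝ)
    [IsProbabilityMeasure α] (hα : α (Icc (-T) 0)ᶜ = 0) :
    ∫⁻ u, ENNReal.ofReal (Real.exp (-(β * u))) ∂α ≤ ENNReal.ofReal (Real.exp (β * T)) := by
  have hsupp : ∀ᵐ u ∂α, u ∈ Icc (-T) 0 := mem_ae_iff.mpr hα
  calc ∫⁻ u, ENNReal.ofReal (Real.exp (-(β * u))) ∂α
      ≤ ∫⁻ _, ENNReal.ofReal (Real.exp (β * T)) ∂α := by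
        refine lintegral_mono_ae (hsupp.mono fun u hu => ?_)
        gcongr
        nlinarith [hu.1]
    _ = ENNReal.ofReal (Real.exp (β * T)) := by simp

theorem stmt_0_general (T β : ℝ) (hβ : 0 ≤ β)
    (α : Measure ℝ) [IsProbabilityMeasure α] (hα : α (Set.Icc (-T) 0)ᶜ = 0)
    (Y : ℝ → ℝ) (hYmeas : Measurable Y)
    (Z : ℝ → ℝ → ℝ) (hZmeas : Measurable (Function.uncurry Z))
    (hZneg : ∀ t s : ℝ, t < 0 ∨ s < 0 → Z t s = 0) :
    (∫⁻ t in Icc (0:ℝ) T, ∫⁻ s in Icc (0:ℝ) T,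
        ENNReal.ofReal (Real.exp (β * s)) *
          ∫⁻ u, (ENNReal.ofReal ((Y (s + u)) ^ 2)
            + ENNReal.ofReal ((Z (t + u) (s + u)) ^ 2)) ∂α)
      ≤ (∫⁻ u, ENNReal.ofReal (Real.exp (-(β * u))) ∂α) *
          (ENNReal.ofReal T *
              (∫⁻ s in Icc (-T) T,
                ENNReal.ofReal (Real.exp (β * s)) * ENNReal.ofReal ((Y s) ^ 2))
            + ∫⁻ t in Icc (0:ℝ) T, ∫⁻ s in Icc (0:ℝ) T,
                ENNReal.ofReal (Real.exp (β * s)) * ENNReal.ofReal ((Z t s) ^ 2))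
    ∧ (∫⁻ u, ENNReal.ofReal (Real.exp (-(β * u))) ∂α) *
          (ENNReal.ofReal T *
              (∫⁻ s in Icc (-T) T,
                ENNReal.ofReal (Real.exp (β * s)) * ENNReal.ofReal ((Y s) ^ 2))
            + ∫⁻ t in Icc (0:ℝ) T, ∫⁻ s in Icc (0:ℝ) T,
                ENNReal.ofReal (Real.exp (β * s)) * ENNReal.ofReal ((Z t s) ^ 2))
        ≤ ENNReal.ofReal (Real.exp (β * T)) *
          (ENNReal.ofReal T *
              (∫⁻ s in Icc (-T) T,
                ENNReal.ofReal (Real.exp (β * s)) * ENNReal.ofReal ((Y s) ^ 2))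
            + ∫⁻ t in Icc (0:ℝ) T, ∫⁻ s in Icc (0:ℝ) T,
                ENNReal.ofReal (Real.exp (β * s)) * ENNReal.ofReal ((Z t s) ^ 2)) := by
  have hY : Measurable fun s => ENNReal.ofReal (Y s ^ 2) := by fun_prop
  have hZ : Measurable (Function.uncurry fun t s => ENNReal.ofReal (Z t s ^ 2)) :=
    ENNReal.measurable_ofReal.comp (hZmeas.pow_const 2)
  have hZ0 : ∀ t s, t < 0 ∨ s < 0 → ENNReal.ofReal (Z t s ^ 2) = 0 := fun t s h => by
    simp [hZneg t s h]
  exact ⟨setLIntegral_setLIntegral_exp_mul_lintegral_delay_le β T α hα hY hZ hZ0,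
    mul_le_mul_left (lintegral_ofReal_exp_neg_mul_le hβ α hα) _⟩

/-- The change-of-variables/Fubini estimate from the proof of Proposition 3.2:
for `Y` extended by `Y t = Y 0` for `t < 0` and `Z` extended by `0` on negative coordinates,
the double time-integral of the delayed quadratic terms is controlled by the weighted norms
of `Y` and `Z`. All integrals are Lebesgue integrals of nonnegative functions in `[0,∞]`. -/
theorem stmt_0 (T β : ℝ) (hT : 0 < T) (hβ : 0 ≤ β)
    (α : Measure ℝ) [IsProbabilityMeasure α] (hα : α (Set.Icc (-T) 0)ᶜ = 0)
    (Y : ℝ → ℝ) (hYmeas : Measurable Y)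
    (hYneg : ∀ t < (0 : ℝ), Y t = Y 0)
    (Z : ℝ → ℝ → ℝ) (hZmeas : Measurable (Function.uncurry Z))
    (hZneg : ∀ t s : ℝ, t < 0 ∨ s < 0 → Z t s = 0) :
    (∫⁻ t in Icc (0:ℝ) T, ∫⁻ s in Icc (0:ℝ) T,
        ENNReal.ofReal (Real.exp (β * s)) *
          ∫⁻ u, (ENNReal.ofReal ((Y (s + u)) ^ 2)
            + ENNReal.ofReal ((Z (t + u) (s + u)) ^ 2)) ∂α)
      ≤ (∫⁻ u, ENNReal.ofReal (Real.exp (-(β * u))) ∂α) *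
          (ENNReal.ofReal T *
              (∫⁻ s in Icc (-T) T,
                ENNReal.ofReal (Real.exp (β * s)) * ENNReal.ofReal ((Y s) ^ 2))
            + ∫⁻ t in Icc (0:ℝ) T, ∫⁻ s in Icc (0:ℝ) T,
                ENNReal.ofReal (Real.exp (β * s)) * ENNReal.ofReal ((Z t s) ^ 2))
    ∧ (∫⁻ u, ENNReal.ofReal (Real.exp (-(β * u))) ∂α) *
          (ENNReal.ofReal T *
              (∫⁻ s in Icc (-T) T,
                ENNReal.ofReal (Real.exp (β * s)) * ENNReal.ofReal ((Y s) ^ 2))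
            + ∫⁻ t in Icc (0:ℝ) T, ∫⁻ s in Icc (0:ℝ) T,
                ENNReal.ofReal (Real.exp (β * s)) * ENNReal.ofReal ((Z t s) ^ 2))
        ≤ ENNReal.ofReal (Real.exp (β * T)) *
          (ENNReal.ofReal T *
              (∫⁻ s in Icc (-T) T,
                ENNReal.ofReal (Real.exp (β * s)) * ENNReal.ofReal ((Y s) ^ 2))
            + ∫⁻ t in Icc (0:ℝ) T, ∫⁻ s in Icc (0:ℝ) T,
                ENNReal.ofReal (Real.exp (β * s)) * ENNReal.ofReal ((Z t s) ^ 2)) :=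
  stmt_0_general T β hβ α hα Y hYmeas Z hZmeas hZneg
end

section
/- Let (Ω, 𝓕, P) be a probability space with a filtration (𝓕_t)_{t ∈ [0,T]}, T > 0, let ψ(0) be an integrable random variable with E[ψ(0)] ≠ 0, and let K > 0 satisfy T·K = 1. Then there exists no random variable Y(0) satisfying Y(0) = E[ψ(0) | 𝓕_0] + K·T · Y(0) almost surely; consequently, the equation Y(t) = E[ψ(t) | 𝓕_t] + K·(T − t)/(t + 1) · Y(0) (for all t ∈ [0,T], almost surely) has no solution (Y(t))_{t ∈ [0,T]}. -/
open MeasureTheory Set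

/-! With `K T = 1` the equation at `t = 0` reads `Y(0) = E[ψ(0) | 𝓕_0] + Y(0)`, which forces
`E[ψ(0) | 𝓕_0] = 0` a.s.; integrating gives `E[ψ(0)] = 0`. -/

theorem MeasureTheory.not_exists_ae_eq_condExp_add_self {Ω : Type*} {m m0 : MeasurableSpace Ω}
    {P : Measure Ω} [IsFiniteMeasure P] (hm : m ≤ m0) {f : Ω → ℝ} (hf : ∫ ω, f ω ∂P ≠ 0) :
    ¬ ∃ Y : Ω → ℝ, Y =ᵐ[P] fun ω => P[f | m] ω + Y ω := by
  rintro ⟨Y, hY⟩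
  have hcondExp_zero : P[f | m] =ᵐ[P] 0 := by
    filter_upwards [hY] with ω hω
    simpa using hω.symm
  apply hf
  rw [← integral_condExp hm, integral_congr_ae hcondExp_zero, Pi.zero_def, integral_zero]

theorem stmt_5_general {Ω : Type*} [m0 : MeasurableSpace Ω] (P : Measure Ω) [IsProbabilityMeasure P]
    (T : ℝ) (hT : 0 < T) (𝓕 : MeasureTheory.Filtration ℝ m0)
    (ψ : ℝ → Ω → ℝ) (hmean : (∫ ω, ψ 0 ω ∂P) ≠ 0)
    (K : ℝ) (hTK : T * K = 1) :
    (¬ ∃ Y0 : Ω → ℝ, Y0 =ᵐ[P] fun ω => (P[ψ 0 | 𝓕 0]) ω + K * T * Y0 ω) ∧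
    (¬ ∃ Y : ℝ → Ω → ℝ, ∀ t ∈ Set.Icc (0:ℝ) T,
        Y t =ᵐ[P] fun ω => (P[ψ t | 𝓕 t]) ω + K * (T - t) / (t + 1) * Y 0 ω) := by
  have hno_solution := not_exists_ae_eq_condExp_add_self (𝓕.le 0) hmean
  have hKT : K * T = 1 := by rw [mul_comm, hTK]
  refine ⟨by simpa only [hKT, one_mul] using hno_solution, ?_⟩
  rintro ⟨Y, hY⟩
  refine hno_solution ⟨Y 0, ?_⟩
  simpa only [sub_zero, zero_add, div_one, hKT, one_mul] using hY 0 ⟨le_rfl, hT.le⟩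

/-- Case (b) of Example 3.5: if `T·K = 1` and `E[ψ(0)] ≠ 0`, then no random variable `Y(0)`
satisfies `Y(0) = E[ψ(0)|𝓕_0] + K·T·Y(0)` a.s., and consequently the reduced equation
`Y(t) = E[ψ(t)|𝓕_t] + K(T-t)/(t+1)·Y(0)` (for all `t ∈ [0,T]`, a.s.) has no solution. -/
theorem stmt_5 {Ω : Type*} [m0 : MeasurableSpace Ω] (P : Measure Ω) [IsProbabilityMeasure P]
    (T : ℝ) (hT : 0 < T) (𝓕 : MeasureTheory.Filtration ℝ m0)
    (ψ : ℝ → Ω → ℝ) (hψ0 : Integrable (ψ 0) P) (hmean : (∫ ω, ψ 0 ω ∂P) ≠ 0)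
    (K : ℝ) (hK : 0 < K) (hTK : T * K = 1) :
    (¬ ∃ Y0 : Ω → ℝ, Y0 =ᵐ[P] fun ω => (P[ψ 0 | 𝓕 0]) ω + K * T * Y0 ω) ∧
    (¬ ∃ Y : ℝ → Ω → ℝ, ∀ t ∈ Set.Icc (0:ℝ) T,
        Y t =ᵐ[P] fun ω => (P[ψ t | 𝓕 t]) ω + K * (T - t) / (t + 1) * Y 0 ω) :=
  stmt_5_general (m0 := m0) P T hT 𝓕 ψ hmean K hTK
end

section
/- Let (Ω, 𝓕, P) be a probability space with a filtration (𝓕_t)_{t ∈ [0,T]}, T > 0, let ψ : [0,T] → L¹(Ω, 𝓕, P) be a family of integrable random variables with E[ψ(0) | 𝓕_0] = 0 almost surely, and let K > 0 satisfy T·K = 1. Then for every 𝓕_0-measurable integrable random variable η, the family Y^η(t) := E[ψ(t) | 𝓕_t] + K·(T − t)/(t + 1) · η satisfies Y^η(0) = η almost surely and solves, for every t ∈ [0,T] almost surely, the equation Y^η(t) = E[ψ(t) | 𝓕_t] + K·(T − t)/(t + 1) · Y^η(0). In particular, distinct choices of deterministic constants η give distinct solutions, so the equation has infinitely many solutions.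 -/
open MeasureTheory Set

/-! At `t = 0` the coefficient `K (T - 0) / (0 + 1)` equals `T K = 1` and `E[ψ(0) | 𝓕_0]`
vanishes, so `Y^η(0) = η` a.s.; substituting this back into `Y^η(t)` gives the equation, and
evaluating at `t = 0` separates the solutions built from different constants. -/

/-- The candidate solution family of case (c) of Example 3.5:
`Y^η(t) = E[ψ(t)|𝓕_t] + K·(T-t)/(t+1)·η`. -/
noncomputable def candidateSol {Ω : Type*} [m0 : MeasurableSpace Ω] (P : Measure Ω)
    (𝓕 : MeasureTheory.Filtration ℝ m0) (T K : ℝ) (ψ : ℝ → Ω → ℝ)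
    (η : Ω → ℝ) (t : ℝ) : Ω → ℝ :=
  fun ω => (P[ψ t | 𝓕 t]) ω + K * (T - t) / (t + 1) * η ω

section CandidateSol

variable {Ω : Type*} [m0 : MeasurableSpace Ω] {P : Measure Ω} {𝓕 : Filtration ℝ m0}
  {T K : ℝ} {ψ : ℝ → Ω → ℝ}

theorem candidateSol_congr_ae {η η' : Ω → ℝ} (h : η =ᵐ[P] η') (t : ℝ) :
    candidateSol P 𝓕 T K ψ η t =ᵐ[P] candidateSol P 𝓕 T K ψ η' t := by
  filter_upwards [h] with ω hω
  simp only [candidateSol, hω]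

theorem candidateSol_zero_ae_eq (hcond : P[ψ 0 | 𝓕 0] =ᵐ[P] 0) (hTK : T * K = 1)
    (η : Ω → ℝ) : candidateSol P 𝓕 T K ψ η 0 =ᵐ[P] η := by
  have hcoeff : K * (T - 0) / (0 + 1) = 1 := by rw [sub_zero, zero_add, div_one, mul_comm, hTK]
  filter_upwards [hcond] with ω hω
  simp only [candidateSol]
  rw [hω, hcoeff, Pi.zero_apply, zero_add, one_mul]

end CandidateSol

theorem stmt_6_general {Ω : Type*} [m0 : MeasurableSpace Ω] (P : Measure Ω) [IsProbabilityMeasure P]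
    (T : ℝ) (hT : 0 < T) (𝓕 : MeasureTheory.Filtration ℝ m0)
    (ψ : ℝ → Ω → ℝ)
    (hcond : P[ψ 0 | 𝓕 0] =ᵐ[P] 0)
    (K : ℝ) (hTK : T * K = 1) :
    (∀ η : Ω → ℝ, Integrable η P → StronglyMeasurable[𝓕 0] η →
      candidateSol P 𝓕 T K ψ η 0 =ᵐ[P] η ∧
      ∀ t ∈ Set.Icc (0:ℝ) T,
        candidateSol P 𝓕 T K ψ η t =ᵐ[P] fun ω =>
          (P[ψ t | 𝓕 t]) ω + K * (T - t) / (t + 1) * candidateSol P 𝓕 T K ψ η 0 ω) ∧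
    (∀ c c' : ℝ, c ≠ c' →
      ¬ ∀ t ∈ Set.Icc (0:ℝ) T,
          candidateSol P 𝓕 T K ψ (fun _ => c) t =ᵐ[P]
            candidateSol P 𝓕 T K ψ (fun _ => c') t) := by
  have hY0 := candidateSol_zero_ae_eq (𝓕 := 𝓕) hcond hTK
  -- the right-hand side of the equation is, by definition, `candidateSol` with `η := Y^η(0)`
  refine ⟨fun η _ _ => ⟨hY0 η, fun t _ => candidateSol_congr_ae (hY0 η).symm t⟩, ?_⟩
  intro c c' hcc' hsame
  have hconst : (fun _ : Ω => c) =ᵐ[P] fun _ => c' :=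
    ((hY0 _).symm.trans (hsame 0 ⟨le_rfl, hT.le⟩)).trans (hY0 _)
  exact hcc' (Filter.const_eventuallyEq.mp hconst)

/-- Case (c) of Example 3.5: if `T·K = 1` and `E[ψ(0)|𝓕_0] = 0` a.s., then for every
`𝓕_0`-measurable integrable `η`, the family `Y^η(t) = E[ψ(t)|𝓕_t] + K(T-t)/(t+1)·η` satisfies
`Y^η(0) = η` a.s. and solves the reduced equation
`Y^η(t) = E[ψ(t)|𝓕_t] + K(T-t)/(t+1)·Y^η(0)` for every `t ∈ [0,T]` a.s.; moreover distinct
deterministic constants `η` give distinct solution families, so there are infinitely many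
solutions. -/
theorem stmt_6 {Ω : Type*} [m0 : MeasurableSpace Ω] (P : Measure Ω) [IsProbabilityMeasure P]
    (T : ℝ) (hT : 0 < T) (𝓕 : MeasureTheory.Filtration ℝ m0)
    (ψ : ℝ → Ω → ℝ) (hψ : ∀ t ∈ Set.Icc (0:ℝ) T, Integrable (ψ t) P)
    (hcond : P[ψ 0 | 𝓕 0] =ᵐ[P] 0)
    (K : ℝ) (hK : 0 < K) (hTK : T * K = 1) :
    (∀ η : Ω → ℝ, Integrable η P → StronglyMeasurable[𝓕 0] η →
      candidateSol P 𝓕 T K ψ η 0 =ᵐ[P] η ∧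
      ∀ t ∈ Set.Icc (0:ℝ) T,
        candidateSol P 𝓕 T K ψ η t =ᵐ[P] fun ω =>
          (P[ψ t | 𝓕 t]) ω + K * (T - t) / (t + 1) * candidateSol P 𝓕 T K ψ η 0 ω) ∧
    (∀ c c' : ℝ, c ≠ c' →
      ¬ ∀ t ∈ Set.Icc (0:ℝ) T,
          candidateSol P 𝓕 T K ψ (fun _ => c) t =ᵐ[P]
            candidateSol P 𝓕 T K ψ (fun _ => c') t) :=
  stmt_6_general (m0 := m0) P T hT 𝓕 ψ hcond K hTK
end
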